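/- No Pareto-ranked splitting at an optimum for an ambiguity-neutral sender: Suppose (σ, μ) is a solution to the sender's problem (P) (obedient and attaining the supremum of U_s over obedient ambiguous experiments), φ_r is strictly concave, and φ_s is affine. Then for every θ in the support of μ there does not exist a Pareto-ranked splitting (σ̄, σ̲, λ) of σ_θ such that u_s(σ̄, τ*) ≥ U_s(σ, μ, τ*) ≥ u_s(σ̲, τ*). -/

import Mathlib

open Finset

/-- A stochastic kernel from `X` to `Y`: each row `k x` is a probability vector on `Y`.
An experiment is a kernel from states `Ω` to messages; a receiver strategy is a kernel
from messages to actions `A`. -/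
def IsKernel {X Y : Type*} [Fintype Y] (k : X → Y → ℝ) : Prop :=
  (∀ x y, 0 ≤ k x y) ∧ ∀ x, ∑ y, k x y = 1

/-- A probability vector on a finite type. -/
def IsProb {Θ : Type*} [Fintype Θ] (μ : Θ → ℝ) : Prop :=
  (∀ θ, 0 ≤ μ θ) ∧ ∑ θ, μ θ = 1

/-- The obedient strategy `τ*`: take the recommended action with probability one. -/
noncomputable def tauStar {A : Type*} [DecidableEq A] : A → A → ℝ :=
  fun m a => if a = m then (1 : ℝ) else 0

/-- Expected payoff `u_i(σ, τ) = ∑_{ω,m,a} p(ω) σ(m|ω) τ(a|m) u_i(a,ω)`. -/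
noncomputable def expPayoff {Ω M A : Type*} [Fintype Ω] [Fintype M] [Fintype A]
    (p : Ω → ℝ) (u : A → Ω → ℝ) (σ : Ω → M → ℝ) (τ : M → A → ℝ) : ℝ :=
  ∑ ω, ∑ m, ∑ a, p ω * σ ω m * τ m a * u a ω

/-- Obedience of a single (unambiguous) canonical experiment: `τ*` is a best reply. -/
def Obedient {Ω A : Type*} [Fintype Ω] [Fintype A] [DecidableEq A]
    (p : Ω → ℝ) (ur : A → Ω → ℝ) (σ : Ω → A → ℝ) : Prop :=
  ∀ τ : A → A → ℝ, IsKernel τ → expPayoff p ur σ τ ≤ expPayoff p ur σ tauStar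

/-- Obedience of an ambiguous experiment `(σ, μ)` for a smooth-ambiguity receiver with
index `φr`:  `τ*` maximizes `τ ↦ U_r(σ, μ, τ) = φr⁻¹(∑_θ μ_θ φr(u_r(σ_θ, τ)))`; since `φr`
is strictly increasing this is equivalent to `τ*` maximizing `τ ↦ ∑_θ μ_θ φr(u_r(σ_θ, τ))`. -/
def AmbObedient {Ω A Θ : Type*} [Fintype Ω] [Fintype A] [DecidableEq A] [Fintype Θ]
    (φr : ℝ → ℝ) (p : Ω → ℝ) (ur : A → Ω → ℝ) (σ : Θ → Ω → A → ℝ) (μ : Θ → ℝ) : Prop :=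
  ∀ τ : A → A → ℝ, IsKernel τ →
    ∑ θ, μ θ * φr (expPayoff p ur (σ θ) τ) ≤ ∑ θ, μ θ * φr (expPayoff p ur (σ θ) tauStar)

/-- A smooth ambiguity index: strictly increasing, concave, differentiable. -/
def SmoothIndex (φ : ℝ → ℝ) : Prop :=
  StrictMono φ ∧ ConcaveOn ℝ Set.univ φ ∧ Differentiable ℝ φ

/-- Two experiments are (strictly) Pareto ranked: under obedience, sender and receiver
strictly rank them the same way. -/
def ParetoRanked {Ω A : Type*} [Fintype Ω] [Fintype A] [DecidableEq A]
    (p : Ω → ℝ) (us ur : A → Ω → ℝ) (σ σ' : Ω → A → ℝ) : Prop :=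
  (expPayoff p us σ' tauStar < expPayoff p us σ tauStar ∧
      expPayoff p ur σ' tauStar < expPayoff p ur σ tauStar) ∨
  (expPayoff p us σ tauStar < expPayoff p us σ' tauStar ∧
      expPayoff p ur σ tauStar < expPayoff p ur σ' tauStar)

/-- Two experiments are weakly Pareto ranked. -/
def WeaklyParetoRanked {Ω A : Type*} [Fintype Ω] [Fintype A] [DecidableEq A]
    (p : Ω → ℝ) (us ur : A → Ω → ℝ) (σ σ' : Ω → A → ℝ) : Prop :=
  (expPayoff p us σ' tauStar ≤ expPayoff p us σ tauStar ∧
      expPayoff p ur σ' tauStar ≤ expPayoff p ur σ tauStar) ∨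
  (expPayoff p us σ tauStar ≤ expPayoff p us σ' tauStar ∧
      expPayoff p ur σ tauStar ≤ expPayoff p ur σ' tauStar)

/-- Pointwise convex combination of two experiments. -/
noncomputable def mixExp {Ω A : Type*} (lam : ℝ) (σ1 σ2 : Ω → A → ℝ) : Ω → A → ℝ :=
  fun ω a => lam * σ1 ω a + (1 - lam) * σ2 ω a

/-- `(σbar, σlo, lam)` is a Pareto-ranked splitting of the experiment `σ`. -/
def ParetoRankedSplitting {Ω A : Type*} [Fintype Ω] [Fintype A] [DecidableEq A]
    (p : Ω → ℝ) (us ur : A → Ω → ℝ) (σbar σlo : Ω → A → ℝ) (lam : ℝ) (σ : Ω → A → ℝ) : Prop :=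
  IsKernel σbar ∧ IsKernel σlo ∧ lam ∈ Set.Ioo (0 : ℝ) 1 ∧
    mixExp lam σbar σlo = σ ∧ ParetoRanked p us ur σbar σlo

/-- The `((σbar, σlo), lam)`-probability premium of a player with utility `u` and index `φ`. -/
noncomputable def probPremium {Ω A : Type*} [Fintype Ω] [Fintype A] [DecidableEq A]
    (p : Ω → ℝ) (u : A → Ω → ℝ) (φ : ℝ → ℝ) (σbar σlo : Ω → A → ℝ) (lam : ℝ) : ℝ :=
  (φ (expPayoff p u (mixExp lam σbar σlo) tauStar) -
      lam * φ (expPayoff p u σbar tauStar) - (1 - lam) * φ (expPayoff p u σlo tauStar)) /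
    (φ (expPayoff p u σbar tauStar) - φ (expPayoff p u σlo tauStar))

/-- The set of `φs`-transformed sender values attainable by obedient ambiguous experiments;
the value of the sender's problem `(P)` equals `u` iff `φs u` is the least upper bound of
this set (since `φs` is continuous and strictly increasing). -/
def senderValues {Ω A : Type*} [Fintype Ω] [Fintype A] [DecidableEq A]
    (φs φr : ℝ → ℝ) (p : Ω → ℝ) (us ur : A → Ω → ℝ) : Set ℝ :=
  {x | ∃ (n : ℕ) (σ : Fin n → Ω → A → ℝ) (μ : Fin n → ℝ),
    (∀ j, IsKernel (σ j)) ∧ IsProb μ ∧ AmbObedient φr p ur σ μ ∧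
    x = ∑ j, μ j * φs (expPayoff p us (σ j) tauStar)}

/-- The set of feasible values of the auxiliary program `(Φ*(u))`: sums
`∑_θ λ_θ Φ_u(σ_θ)` over splittings `(λ_θ, σ_θ)` of obedient experiments, where
`Φ_u(σ) = (φs(u_s(σ,τ*)) − φs(u)) / φr'(u_r(σ,τ*))`. -/
def phiProgram {Ω A : Type*} [Fintype Ω] [Fintype A] [DecidableEq A]
    (φs φr : ℝ → ℝ) (p : Ω → ℝ) (us ur : A → Ω → ℝ) (u : ℝ) : Set ℝ :=
  {x | ∃ (n : ℕ) (σ : Fin n → Ω → A → ℝ) (lam : Fin n → ℝ),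
    (∀ j, IsKernel (σ j)) ∧ IsProb lam ∧
    Obedient p ur (fun ω a => ∑ j, lam j * σ j ω a) ∧
    x = ∑ j, lam j * ((φs (expPayoff p us (σ j) tauStar) - φs u) /
      deriv φr (expPayoff p ur (σ j) tauStar))}


/-!
If `σ θ` splits as `λ σbar + (1 - λ) σlo` with `σbar` Pareto-better, replace `σ θ` in the
family by `σbar` and `σlo`, with weights `μ θ λ φr'(u_r(σ θ)) / φr'(u_r(σbar))` and
`μ θ (1 - λ) φr'(u_r(σ θ)) / φr'(u_r(σlo))`. These weights leave the receiver's first-order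
deviation gains unchanged, and for concave `φr` the first-order conditions characterise
obedience, so the new family is still obedient. As `φr'` is strictly decreasing, weight moves
from `σlo` to `σbar`; since `φs` is affine and `u_s(σbar) ≥ U_s ≥ u_s(σlo)` with one inequality
strict, the sender's value strictly increases, contradicting optimality.
-/

open Set

section Payoff

variable {Ω M A : Type*} [Fintype Ω] [Fintype M] [Fintype A]

@[simp]
lemma mixExp_zero {X Y : Type*} (k₁ k₂ : X → Y → ℝ) : mixExp 0 k₁ k₂ = k₂ := by
  ext; simp [mixExp]

lemma IsKernel.mixExp {X Y : Type*} [Fintype Y] {k₁ k₂ : X → Y → ℝ} (h₁ : IsKernel k₁)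
    (h₂ : IsKernel k₂) {lam : ℝ} (h0 : 0 ≤ lam) (h1 : lam ≤ 1) :
    IsKernel (mixExp lam k₁ k₂) := by
  refine ⟨fun x y => ?_, fun x => ?_⟩
  · have := h₁.1 x y
    have := h₂.1 x y
    simp only [_root_.mixExp]
    nlinarith
  · simp [_root_.mixExp, Finset.sum_add_distrib, ← Finset.mul_sum, h₁.2, h₂.2]

lemma isKernel_tauStar {A : Type*} [Fintype A] [DecidableEq A] :
    IsKernel (tauStar : A → A → ℝ) :=
  ⟨fun m a => by unfold tauStar; split_ifs <;> norm_num, fun m => by simp [tauStar]⟩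

lemma expPayoff_mixExp_left (p : Ω → ℝ) (u : A → Ω → ℝ) (lam : ℝ) (σ₁ σ₂ : Ω → M → ℝ)
    (τ : M → A → ℝ) :
    expPayoff p u (mixExp lam σ₁ σ₂) τ =
      lam * expPayoff p u σ₁ τ + (1 - lam) * expPayoff p u σ₂ τ := by
  simp only [expPayoff, mixExp, Finset.mul_sum, ← Finset.sum_add_distrib]
  congr! 3
  ring

lemma expPayoff_mixExp_right (p : Ω → ℝ) (u : A → Ω → ℝ) (σ : Ω → M → ℝ) (lam : ℝ)
    (τ₁ τ₂ : M → A → ℝ) :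
    expPayoff p u σ (mixExp lam τ₁ τ₂) =
      lam * expPayoff p u σ τ₁ + (1 - lam) * expPayoff p u σ τ₂ := by
  simp only [expPayoff, mixExp, Finset.mul_sum, ← Finset.sum_add_distrib]
  congr! 3
  ring

end Payoff

lemma mul_add_mul_pos_of_add_pos {a c x y : ℝ} (ha : 0 < a) (hc : 0 < c) (hx : 0 ≤ x)
    (hy : 0 ≤ y) (hxy : 0 < x + y) : 0 < a * x + c * y := by
  rcases hx.eq_or_lt with rfl | hx
  · simpa using mul_pos hc (by simpa using hxy)
  · nlinarith [mul_pos ha hx, mul_nonneg hc.le hy]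

section Calculus

variable {φ : ℝ → ℝ} {x : ℝ}

lemma ConcaveOn.le_add_deriv_mul_sub {S : Set ℝ} (hc : ConcaveOn ℝ S φ) (hx : x ∈ S)
    (hd : DifferentiableAt ℝ φ x) {y : ℝ} (hy : y ∈ S) :
    φ y ≤ φ x + deriv φ x * (y - x) := by
  rcases lt_trichotomy x y with hxy | rfl | hyx
  · have h := hc.slope_le_deriv hx hy hxy hd
    rw [slope_def_field, div_le_iff₀ (sub_pos.2 hxy)] at h
    linarith
  · simp
  · have h := hc.deriv_le_slope hy hx hyx hd
    rw [slope_def_field, le_div_iff₀ (sub_pos.2 hyx)] at h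
    linarith

lemma ConcaveOn.deriv_pos_of_strictMono (hc : ConcaveOn ℝ univ φ) (hm : StrictMono φ)
    (hd : DifferentiableAt ℝ φ x) : 0 < deriv φ x := by
  have h := hc.le_add_deriv_mul_sub (mem_univ x) hd (mem_univ (x + 1))
  have := hm (lt_add_one x)
  nlinarith

lemma HasDerivAt.nonpos_of_isMaxOn_Icc {f : ℝ → ℝ} {d a b : ℝ} (hf : HasDerivAt f d a)
    (hab : a < b) (hmax : IsMaxOn f (Icc a b) a) : d ≤ 0 := by
  have h := hmax.localize.hasFDerivWithinAt_nonpos hf.hasDerivWithinAt.hasFDerivWithinAt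
    (sub_mem_posTangentConeAt_of_segment_subset (segment_eq_Icc hab.le).subset)
  simp only [ContinuousLinearMap.toSpanSingleton_apply, smul_eq_mul] at h
  exact nonpos_of_mul_nonpos_right h (sub_pos.2 hab)

lemma StrictConcaveOn.exists_marginal_reweighting (hc : StrictConcaveOn ℝ univ φ)
    (hm : StrictMono φ) (hd : Differentiable ℝ φ) {a b lam w : ℝ} (hab : a < b)
    (hlam0 : 0 < lam) (hlam1 : lam < 1) (hw : 0 < w) :
    ∃ xbar xlo : ℝ, w * lam < xbar ∧ 0 ≤ xlo ∧ xlo < w * (1 - lam) ∧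
      xbar * deriv φ b = w * lam * deriv φ (lam * b + (1 - lam) * a) ∧
      xlo * deriv φ a = w * (1 - lam) * deriv φ (lam * b + (1 - lam) * a) := by
  have hanti := hc.strictAntiOn_deriv fun z _ => hd z
  have hBM : deriv φ b < deriv φ (lam * b + (1 - lam) * a) :=
    hanti (mem_univ _) (mem_univ _) (by nlinarith)
  have hML : deriv φ (lam * b + (1 - lam) * a) < deriv φ a :=
    hanti (mem_univ _) (mem_univ _) (by nlinarith)
  have hB : 0 < deriv φ b := hc.concaveOn.deriv_pos_of_strictMono hm (hd b)
  have hL : 0 < deriv φ a := hB.trans (hBM.trans hML)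
  have h1lam : 0 < 1 - lam := sub_pos.2 hlam1
  refine ⟨w * lam * (deriv φ (lam * b + (1 - lam) * a) / deriv φ b),
    w * (1 - lam) * (deriv φ (lam * b + (1 - lam) * a) / deriv φ a),
    lt_mul_of_one_lt_right (by positivity) ((one_lt_div hB).2 hBM),
    mul_nonneg (by positivity) (div_nonneg (hB.trans hBM).le hL.le),
    mul_lt_of_lt_one_right (by positivity) ((div_lt_one hL).2 hML),
    by rw [mul_assoc, div_mul_cancel₀ _ hB.ne'], by rw [mul_assoc, div_mul_cancel₀ _ hL.ne']⟩

end Calculus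

section Obedience

variable {Ω A Θ : Type*} [Fintype Ω] [Fintype A] [DecidableEq A] [Fintype Θ]
  {φr : ℝ → ℝ} {p : Ω → ℝ} {ur : A → Ω → ℝ}

noncomputable def marginalDeviationGain (φr : ℝ → ℝ) (p : Ω → ℝ) (ur : A → Ω → ℝ)
    (σ : Θ → Ω → A → ℝ) (μ : Θ → ℝ) (τ : A → A → ℝ) : ℝ :=
  ∑ θ, μ θ * (deriv φr (expPayoff p ur (σ θ) tauStar) *
    (expPayoff p ur (σ θ) τ - expPayoff p ur (σ θ) tauStar))

lemma hasDerivAt_deviationPath (hd : Differentiable ℝ φr) (σ : Θ → Ω → A → ℝ) (μ : Θ → ℝ)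
    (τ : A → A → ℝ) :
    HasDerivAt (fun s => ∑ θ, μ θ * φr (expPayoff p ur (σ θ) (mixExp s τ tauStar)))
      (marginalDeviationGain φr p ur σ μ τ) 0 := by
  simp only [expPayoff_mixExp_right]
  refine HasDerivAt.fun_sum fun θ _ => HasDerivAt.const_mul _ ?_
  set a := expPayoff p ur (σ θ) τ
  set b := expPayoff p ur (σ θ) tauStar
  have hline : HasDerivAt (fun s : ℝ => s * a + (1 - s) * b) (a - b) 0 := by
    have hform : (fun s : ℝ => s * a + (1 - s) * b) = fun s => b + s * (a - b) := by
      funext s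
      ring
    simpa [hform] using ((hasDerivAt_id' (0 : ℝ)).mul_const (a - b)).const_add b
  exact (hd b).hasDerivAt.comp_of_eq 0 hline (by ring)

lemma AmbObedient.marginalDeviationGain_nonpos {σ : Θ → Ω → A → ℝ} {μ : Θ → ℝ}
    (hob : AmbObedient φr p ur σ μ) (hd : Differentiable ℝ φr) {τ : A → A → ℝ}
    (hτ : IsKernel τ) : marginalDeviationGain φr p ur σ μ τ ≤ 0 :=
  (hasDerivAt_deviationPath hd σ μ τ).nonpos_of_isMaxOn_Icc one_pos fun s hs => by
    simpa using hob _ (hτ.mixExp isKernel_tauStar hs.1 hs.2)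

lemma ambObedient_of_marginalDeviationGain_nonpos (hc : ConcaveOn ℝ univ φr)
    (hd : Differentiable ℝ φr) {σ : Θ → Ω → A → ℝ} {μ : Θ → ℝ} (hμ : ∀ θ, 0 ≤ μ θ)
    (hgain : ∀ τ, IsKernel τ → marginalDeviationGain φr p ur σ μ τ ≤ 0) :
    AmbObedient φr p ur σ μ := by
  intro τ hτ
  calc ∑ θ, μ θ * φr (expPayoff p ur (σ θ) τ)
      ≤ ∑ θ, μ θ * (φr (expPayoff p ur (σ θ) tauStar) +
          deriv φr (expPayoff p ur (σ θ) tauStar) *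
            (expPayoff p ur (σ θ) τ - expPayoff p ur (σ θ) tauStar)) :=
        Finset.sum_le_sum fun θ _ => mul_le_mul_of_nonneg_left
          (hc.le_add_deriv_mul_sub (mem_univ _) (hd _) (mem_univ _)) (hμ θ)
    _ = ∑ θ, μ θ * φr (expPayoff p ur (σ θ) tauStar) +
          marginalDeviationGain φr p ur σ μ τ := by
        simp only [marginalDeviationGain, mul_add, Finset.sum_add_distrib]
    _ ≤ ∑ θ, μ θ * φr (expPayoff p ur (σ θ) tauStar) := by linarith [hgain τ hτ]

end Obedience

/-- `AmbObedient` is invariant under rescaling the weights, so normalise them and reindex by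
`Fin n`. -/
lemma sum_mul_le_of_mem_upperBounds_senderValues {Ω A : Type*} [Fintype Ω] [Fintype A]
    [DecidableEq A] {φs φr : ℝ → ℝ} {p : Ω → ℝ} {us ur : A → Ω → ℝ} {v : ℝ}
    (hv : v ∈ upperBounds (senderValues φs φr p us ur)) {J : Type*} [Fintype J]
    {F : J → Ω → A → ℝ} (hF : ∀ j, IsKernel (F j)) {x : J → ℝ} (hx : ∀ j, 0 ≤ x j)
    (hob : AmbObedient φr p ur F x) :
    ∑ j, x j * φs (expPayoff p us (F j) tauStar) ≤ (∑ j, x j) * v := by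
  rcases (Finset.sum_nonneg fun j _ => hx j).eq_or_lt with hzero | hpos
  · have hx0 : ∀ j, x j = 0 := fun j =>
      (Finset.sum_eq_zero_iff_of_nonneg fun j _ => hx j).1 hzero.symm j (Finset.mem_univ j)
    simp [hx0]
  set S := ∑ j, x j
  set e := Fintype.equivFin J
  have hnorm : ∀ g : J → ℝ, ∑ i, x (e.symm i) / S * g (e.symm i) = (∑ j, x j * g j) / S :=
    fun g => by
      rw [Equiv.sum_comp e.symm fun j => x j / S * g j, Finset.sum_div]
      exact Finset.sum_congr rfl fun j _ => div_mul_eq_mul_div _ _ _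
  have hmem := hv ⟨Fintype.card J, fun i => F (e.symm i), fun i => x (e.symm i) / S,
    fun i => hF _,
    ⟨fun i => div_nonneg (hx _) hpos.le, by rw [← div_self hpos.ne']; simpa using hnorm 1⟩,
    fun τ hτ => by
      rw [hnorm fun j => φr (expPayoff p ur (F j) τ),
        hnorm fun j => φr (expPayoff p ur (F j) tauStar)]
      exact div_le_div_of_nonneg_right (hob τ hτ) hpos.le,
    (hnorm fun j => φs (expPayoff p us (F j) tauStar)).symm⟩
  rwa [div_le_iff₀' hpos] at hmem

section ExtendByPair

variable {Θ β : Type*}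

def extendByPair (f : Θ → β) (bar lo : β) : Θ ⊕ Bool → β :=
  Sum.elim f fun b => cond b bar lo

lemma forall_extendByPair {P : β → Prop} {f : Θ → β} {bar lo : β} (hf : ∀ θ, P (f θ))
    (hbar : P bar) (hlo : P lo) : ∀ j, P (extendByPair f bar lo j)
  | .inl θ => hf θ
  | .inr true => hbar
  | .inr false => hlo

variable [DecidableEq Θ]

lemma extendByPair_update_nonneg {μ : Θ → ℝ} (hμ : ∀ θ, 0 ≤ μ θ) (θ₀ : Θ) {xbar xlo : ℝ}
    (hxbar : 0 ≤ xbar) (hxlo : 0 ≤ xlo) :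
    ∀ j, 0 ≤ extendByPair (Function.update μ θ₀ 0) xbar xlo j := by
  refine forall_extendByPair (fun θ => ?_) hxbar hxlo
  rcases eq_or_ne θ θ₀ with rfl | hθ
  · simp
  · simpa [hθ] using hμ θ

variable [Fintype Θ]

lemma sum_extendByPair_update_mul (μ : Θ → ℝ) (θ₀ : Θ) (xbar xlo : ℝ) (g : Θ ⊕ Bool → ℝ) :
    ∑ j, extendByPair (Function.update μ θ₀ 0) xbar xlo j * g j =
      ∑ θ, μ θ * g (.inl θ) - μ θ₀ * g (.inl θ₀) + xbar * g (.inr true) +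
        xlo * g (.inr false) := by
  have hupdate : ∀ θ, Function.update μ θ₀ 0 θ * g (.inl θ) =
      μ θ * g (.inl θ) - if θ = θ₀ then μ θ₀ * g (.inl θ₀) else 0 := by
    intro θ
    rcases eq_or_ne θ θ₀ with rfl | hθ <;> simp [*]
  simp only [extendByPair, Fintype.sum_sum_type, Fintype.sum_bool, Sum.elim_inl, Sum.elim_inr,
    cond_true, cond_false, hupdate, Finset.sum_sub_distrib, Finset.sum_ite_eq', Finset.mem_univ,
    if_true]
  ring

end ExtendByPair

section Splitting

variable {Ω A Θ : Type*} [Fintype Ω] [Fintype A] [DecidableEq A] [Fintype Θ] [DecidableEq Θ]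
  {φr : ℝ → ℝ} {p : Ω → ℝ} {ur : A → Ω → ℝ} {σ : Θ → Ω → A → ℝ} {μ : Θ → ℝ} {θ₀ : Θ}
  {σbar σlo : Ω → A → ℝ} {lam xbar xlo : ℝ}

lemma marginalDeviationGain_extendByPair (hmix : mixExp lam σbar σlo = σ θ₀)
    (hbar : xbar * deriv φr (expPayoff p ur σbar tauStar) =
      μ θ₀ * lam * deriv φr (expPayoff p ur (σ θ₀) tauStar))
    (hlo : xlo * deriv φr (expPayoff p ur σlo tauStar) =
      μ θ₀ * (1 - lam) * deriv φr (expPayoff p ur (σ θ₀) tauStar)) (τ : A → A → ℝ) :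
    marginalDeviationGain φr p ur (extendByPair σ σbar σlo)
        (extendByPair (Function.update μ θ₀ 0) xbar xlo) τ =
      marginalDeviationGain φr p ur σ μ τ := by
  rw [marginalDeviationGain, sum_extendByPair_update_mul, marginalDeviationGain]
  simp only [extendByPair, Sum.elim_inl, Sum.elim_inr, cond_true, cond_false]
  have hsplit : ∀ τ', expPayoff p ur (σ θ₀) τ' =
      lam * expPayoff p ur σbar τ' + (1 - lam) * expPayoff p ur σlo τ' := fun τ' => by
    rw [← hmix, expPayoff_mixExp_left]
  set M := deriv φr (expPayoff p ur (σ θ₀) tauStar)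
  rw [hsplit τ, hsplit tauStar]
  linear_combination (expPayoff p ur σbar τ - expPayoff p ur σbar tauStar) * hbar +
    (expPayoff p ur σlo τ - expPayoff p ur σlo tauStar) * hlo

lemma AmbObedient.extendByPair (hob : AmbObedient φr p ur σ μ) (hc : ConcaveOn ℝ univ φr)
    (hd : Differentiable ℝ φr) (hmix : mixExp lam σbar σlo = σ θ₀)
    (hw : ∀ j, 0 ≤ extendByPair (Function.update μ θ₀ 0) xbar xlo j)
    (hbar : xbar * deriv φr (expPayoff p ur σbar tauStar) =
      μ θ₀ * lam * deriv φr (expPayoff p ur (σ θ₀) tauStar))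
    (hlo : xlo * deriv φr (expPayoff p ur σlo tauStar) =
      μ θ₀ * (1 - lam) * deriv φr (expPayoff p ur (σ θ₀) tauStar)) :
    AmbObedient φr p ur (_root_.extendByPair σ σbar σlo)
      (_root_.extendByPair (Function.update μ θ₀ 0) xbar xlo) := by
  refine ambObedient_of_marginalDeviationGain_nonpos hc hd hw fun τ hτ => ?_
  rw [marginalDeviationGain_extendByPair hmix hbar hlo]
  exact hob.marginalDeviationGain_nonpos hd hτ

lemma lt_sum_extendByPair_update_mul_of_affine {φs : ℝ → ℝ} (hmono : StrictMono φs)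
    (haff : ∃ α β : ℝ, ∀ x, φs x = α * x + β) {us : A → Ω → ℝ}
    (hmix : mixExp lam σbar σlo = σ θ₀) (hμ : ∑ θ, μ θ = 1) {V : ℝ}
    (hV : φs V = ∑ θ, μ θ * φs (expPayoff p us (σ θ) tauStar))
    (hxbar : μ θ₀ * lam < xbar) (hxlo : xlo < μ θ₀ * (1 - lam))
    (hVbar : V ≤ expPayoff p us σbar tauStar) (hVlo : expPayoff p us σlo tauStar ≤ V)
    (hus : expPayoff p us σlo tauStar < expPayoff p us σbar tauStar) :
    (∑ j, _root_.extendByPair (Function.update μ θ₀ 0) xbar xlo j) * φs V <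
      ∑ j, _root_.extendByPair (Function.update μ θ₀ 0) xbar xlo j *
        φs (expPayoff p us (_root_.extendByPair σ σbar σlo j) tauStar) := by
  obtain ⟨α, β, haff⟩ := haff
  have hφs₀ : φs (expPayoff p us (σ θ₀) tauStar) = lam * φs (expPayoff p us σbar tauStar) +
      (1 - lam) * φs (expPayoff p us σlo tauStar) := by
    rw [← hmix, expPayoff_mixExp_left, haff, haff, haff]
    ring
  have htotal := sum_extendByPair_update_mul μ θ₀ xbar xlo 1
  rw [sum_extendByPair_update_mul]
  simp only [extendByPair, Sum.elim_inl, Sum.elim_inr, cond_true, cond_false, Pi.one_apply,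
    mul_one, hμ] at htotal ⊢
  rw [htotal, ← hV, hφs₀]
  have hgain := mul_add_mul_pos_of_add_pos (sub_pos.2 hxbar) (sub_pos.2 hxlo)
    (sub_nonneg.2 (hmono.monotone hVbar)) (sub_nonneg.2 (hmono.monotone hVlo))
    (by linarith [hmono hus])
  linarith

end Splitting

theorem no_pareto_ranked_splitting_at_optimum_general
    {Ω A Θ : Type*} [Fintype Ω] [Fintype A] [DecidableEq A] [Fintype Θ]
    (p : Ω → ℝ) (us ur : A → Ω → ℝ)
    (φs φr : ℝ → ℝ) (hφs : SmoothIndex φs) (hφr : SmoothIndex φr)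
    (hφrstrict : StrictConcaveOn ℝ Set.univ φr)
    (hφsaff : ∃ α β : ℝ, ∀ x, φs x = α * x + β)
    (σ : Θ → Ω → A → ℝ) (hσ : ∀ θ, IsKernel (σ θ)) (μ : Θ → ℝ) (hμ : IsProb μ)
    (hobed : AmbObedient φr p ur σ μ)
    (hopt : ∀ (n : ℕ) (σ' : Fin n → Ω → A → ℝ) (μ' : Fin n → ℝ),
      (∀ j, IsKernel (σ' j)) → IsProb μ' → AmbObedient φr p ur σ' μ' →
      ∑ j, μ' j * φs (expPayoff p us (σ' j) tauStar) ≤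
        ∑ θ, μ θ * φs (expPayoff p us (σ θ) tauStar))
    (Us : ℝ) (hUs : φs Us = ∑ θ, μ θ * φs (expPayoff p us (σ θ) tauStar)) :
    ∀ θ, μ θ ≠ 0 →
      ¬ ∃ (σbar σlo : Ω → A → ℝ) (lam : ℝ),
          ParetoRankedSplitting p us ur σbar σlo lam (σ θ) ∧
          Us ≤ expPayoff p us σbar tauStar ∧
          expPayoff p us σlo tauStar ≤ Us := by
  classical
  obtain ⟨hφr_mono, hφr_conc, hφr_diff⟩ := hφr
  rintro θ₀ hθ₀ ⟨σbar, σlo, lam, ⟨hbar, hlo, ⟨hlam0, hlam1⟩, hmix, hranked⟩, hUbar, hUlo⟩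
  obtain ⟨hus, hur⟩ := hranked.resolve_right fun h => (hUbar.trans_lt h.1).not_ge hUlo
  have hur₀ : expPayoff p ur (σ θ₀) tauStar =
      lam * expPayoff p ur σbar tauStar + (1 - lam) * expPayoff p ur σlo tauStar := by
    rw [← hmix, expPayoff_mixExp_left]
  obtain ⟨xbar, xlo, hxbar, hxlo0, hxlo, hbar_eq, hlo_eq⟩ :=
    hφrstrict.exists_marginal_reweighting hφr_mono hφr_diff hur hlam0 hlam1
      ((hμ.1 θ₀).lt_of_ne' hθ₀)
  have hw := extendByPair_update_nonneg hμ.1 θ₀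
    ((mul_nonneg (hμ.1 θ₀) hlam0.le).trans hxbar.le) hxlo0
  have hval := sum_mul_le_of_mem_upperBounds_senderValues
    (fun x ⟨n, σ', μ', hσ', hμ', hob, hx⟩ => hx ▸ hUs ▸ hopt n σ' μ' hσ' hμ' hob)
    (forall_extendByPair hσ hbar hlo) hw
    (hobed.extendByPair hφr_conc hφr_diff hmix hw (hur₀ ▸ hbar_eq) (hur₀ ▸ hlo_eq))
  exact (lt_sum_extendByPair_update_mul_of_affine hφs.1 hφsaff hmix hμ.2 hUs hxbar hxlo hUbar
    hUlo hus).not_ge hval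

/-- Theorem 1 (ii): at a solution `(σ, μ)` of the sender's problem `(P)`,
with `φr` strictly concave and `φs` affine, no experiment in the support of `μ` admits a
Pareto-ranked splitting `(σbar, σlo, lam)` with `u_s(σbar,τ*) ≥ U_s(σ,μ,τ*) ≥ u_s(σlo,τ*)`.
Here `Us` denotes `U_s(σ, μ, τ*)`, i.e. `φs Us = ∑_θ μ_θ φs(u_s(σ_θ, τ*))`. -/
theorem no_pareto_ranked_splitting_at_optimum
    {Ω A Θ : Type*} [Fintype Ω] [Fintype A] [DecidableEq A] [Fintype Θ]
    (p : Ω → ℝ) (hp : IsProb p) (us ur : A → Ω → ℝ)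
    (φs φr : ℝ → ℝ) (hφs : SmoothIndex φs) (hφr : SmoothIndex φr)
    (hφrstrict : StrictConcaveOn ℝ Set.univ φr)
    (hφsaff : ∃ α β : ℝ, ∀ x, φs x = α * x + β)
    (σ : Θ → Ω → A → ℝ) (hσ : ∀ θ, IsKernel (σ θ)) (μ : Θ → ℝ) (hμ : IsProb μ)
    (hobed : AmbObedient φr p ur σ μ)
    (hopt : ∀ (n : ℕ) (σ' : Fin n → Ω → A → ℝ) (μ' : Fin n → ℝ),
      (∀ j, IsKernel (σ' j)) → IsProb μ' → AmbObedient φr p ur σ' μ' →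
      ∑ j, μ' j * φs (expPayoff p us (σ' j) tauStar) ≤
        ∑ θ, μ θ * φs (expPayoff p us (σ θ) tauStar))
    (Us : ℝ) (hUs : φs Us = ∑ θ, μ θ * φs (expPayoff p us (σ θ) tauStar)) :
    ∀ θ, μ θ ≠ 0 →
      ¬ ∃ (σbar σlo : Ω → A → ℝ) (lam : ℝ),
          ParetoRankedSplitting p us ur σbar σlo lam (σ θ) ∧
          Us ≤ expPayoff p us σbar tauStar ∧
          expPayoff p us σlo tauStar ≤ Us :=
  no_pareto_ranked_splitting_at_optimum_general p us ur φs φr hφs hφr hφrstrict hφsaff σ hσ μ hμ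
    hobed hopt Us hUs
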